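/- (Probability of the high-density band) For every privacy budget ε > 0, scale h > 0, center H̄ ∈ ℝ, bias Ā ∈ ℝ, and input x ∈ [H̄−h, H̄+h], the probability that the Zeal output lands in the central band equals p·(C−h) = e^{ε/2}/(e^{ε/2}+1); that is, ∫_{L(x)}^{R(x)} g_x(t) dt = e^{ε/2}/(e^{ε/2}+1), and consequently the probability of landing in the two tails equals 1/(e^{ε/2}+1). -/

import Mathlib

open MeasureTheory Real

/-- Probability level `p` of the Zeal piecewise density. -/
noncomputable def zealP (ε h : ℝ) : ℝ :=
  (Real.exp ε - Real.exp (ε / 2)) / (2 * h * (Real.exp (ε / 2) + 1))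

/-- Output half-width `C` of the Zeal mechanism. -/
noncomputable def zealC (ε h : ℝ) : ℝ :=
  h * (Real.exp (ε / 2) + 1) / (Real.exp (ε / 2) - 1)

/-- Left endpoint `L(x)` of the central (high-probability) band. -/
noncomputable def zealL (ε h H A x : ℝ) : ℝ :=
  (zealC ε h + h) / 2 * ((x - H) / h) - (zealC ε h - h) / 2 + H + A

/-- Right endpoint `R(x)` of the central band. -/
noncomputable def zealR (ε h H A x : ℝ) : ℝ :=
  zealL ε h H A x + zealC ε h - h

/-- The Zeal probability density `g_x` with parameters `(ε, h, H̄, Ā)`. -/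
noncomputable def zealG (ε h H A x t : ℝ) : ℝ :=
  if H - zealC ε h + A ≤ t ∧ t < zealL ε h H A x then zealP ε h / Real.exp ε
  else if zealL ε h H A x ≤ t ∧ t ≤ zealR ε h H A x then zealP ε h
  else if zealR ε h H A x < t ∧ t ≤ H + zealC ε h + A then zealP ε h / Real.exp ε
  else 0

/-! With `E = e^{ε/2}` one has `e^ε = E²`, `p = E(E-1)/(2h(E+1))`, `C - h = 2h/(E-1)` and
`C + h = 2hE/(E-1)`. The density is the constant `p` on the band `[L(x), R(x)]`, of length `C - h`,
and the constant `p/e^ε` on the two tails, whose lengths add up to `2C - (C - h) = C + h`;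
the input constraint `x ∈ [H̄ - h, H̄ + h]` is what keeps the band inside `[x*min, x*max]`. -/

open Set

theorem setIntegral_eq_measureReal_mul_of_eqOn {α : Type*} [MeasurableSpace α] {μ : Measure α}
    {s : Set α} {f : α → ℝ} {c : ℝ} (hs : MeasurableSet s) (hf : EqOn f (fun _ => c) s) :
    ∫ t in s, f t ∂μ = μ.real s * c := by
  rw [setIntegral_congr_fun hs hf, setIntegral_const, smul_eq_mul]

theorem Real.volume_real_Ico_union_Ioc {a b c d : ℝ} (hab : a ≤ b) (hbc : b ≤ c)
    (hcd : c ≤ d) :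
    volume.real (Ico a b ∪ Ioc c d) = (b - a) + (d - c) := by
  have hdisj : Disjoint (Ico a b) (Ioc c d) :=
    disjoint_left.mpr fun _ ht ht' => (ht.2.trans_le hbc).not_gt ht'.1
  rw [measureReal_union hdisj measurableSet_Ioc measure_Ico_lt_top.ne measure_Ioc_lt_top.ne,
    Real.volume_real_Ico_of_le hab,
    Real.volume_real_Ioc_of_le hcd]

section Zeal

variable {ε h : ℝ}

theorem one_lt_exp_half (hε : 0 < ε) : 1 < Real.exp (ε / 2) :=
  Real.one_lt_exp_iff.mpr (half_pos hε)

theorem exp_eq_exp_half_mul_exp_half (ε : ℝ) :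
    Real.exp ε = Real.exp (ε / 2) * Real.exp (ε / 2) := by
  rw [← Real.exp_add, add_halves]

theorem zealC_sub_self (hε : 0 < ε) :
    zealC ε h - h = 2 * h / (Real.exp (ε / 2) - 1) := by
  have := sub_pos.mpr (one_lt_exp_half hε)
  unfold zealC
  field_simp
  ring

theorem lt_zealC (hε : 0 < ε) (hh : 0 < h) : h < zealC ε h := by
  have := sub_pos.mpr (one_lt_exp_half hε)
  have : 0 < zealC ε h - h := by rw [zealC_sub_self hε]; positivity
  linarith

theorem zealP_mul_zealC_sub_self (hε : 0 < ε) (hh : h ≠ 0) :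
    zealP ε h * (zealC ε h - h) = Real.exp (ε / 2) / (Real.exp (ε / 2) + 1) := by
  have := sub_pos.mpr (one_lt_exp_half hε)
  rw [zealC_sub_self hε, zealP, exp_eq_exp_half_mul_exp_half]
  field_simp

theorem zealP_div_exp_mul_zealC_add_self (hε : 0 < ε) (hh : h ≠ 0) :
    zealP ε h / Real.exp ε * (zealC ε h + h) = 1 / (Real.exp (ε / 2) + 1) := by
  have := sub_pos.mpr (one_lt_exp_half hε)
  rw [zealP, zealC, exp_eq_exp_half_mul_exp_half]
  field_simp
  ring

variable {H A x : ℝ}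

theorem zealR_sub_zealL : zealR ε h H A x - zealL ε h H A x = zealC ε h - h := by
  unfold zealR
  ring

theorem zealL_le_zealR (hε : 0 < ε) (hh : 0 < h) : zealL ε h H A x ≤ zealR ε h H A x := by
  rw [← sub_nonneg, zealR_sub_zealL, sub_nonneg]
  exact (lt_zealC hε hh).le

theorem zealL_sub_add_sub_zealR :
    zealL ε h H A x - (H - zealC ε h + A) + (H + zealC ε h + A - zealR ε h H A x) =
      zealC ε h + h := by
  unfold zealR
  ring

theorem sub_zealC_add_le_zealL (hε : 0 < ε) (hh : 0 < h) (hx : H - h ≤ x) :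
    H - zealC ε h + A ≤ zealL ε h H A x := by
  have hL : zealL ε h H A x - (H - zealC ε h + A) = (zealC ε h + h) / 2 * ((x - H + h) / h) := by
    unfold zealL
    field_simp
    ring
  have hC := lt_zealC hε hh
  rw [← sub_nonneg, hL]
  apply mul_nonneg <;> apply div_nonneg <;> linarith

theorem zealR_le_add_zealC_add (hε : 0 < ε) (hh : 0 < h) (hx : x ≤ H + h) :
    zealR ε h H A x ≤ H + zealC ε h + A := by
  have hR : H + zealC ε h + A - zealR ε h H A x = (zealC ε h + h) / 2 * ((H + h - x) / h) := by
    unfold zealR zealL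
    field_simp
    ring
  have hC := lt_zealC hε hh
  rw [← sub_nonneg, hR]
  apply mul_nonneg <;> apply div_nonneg <;> linarith

theorem zealG_eqOn_band :
    EqOn (zealG ε h H A x) (fun _ => zealP ε h) (Icc (zealL ε h H A x) (zealR ε h H A x)) := by
  intro t ⟨hLt, htR⟩
  rw [zealG, if_neg fun ht => (ht.2.not_ge hLt), if_pos ⟨hLt, htR⟩]

theorem zealG_eqOn_tails (hε : 0 < ε) (hh : 0 < h) :
    EqOn (zealG ε h H A x) (fun _ => zealP ε h / Real.exp ε)
      (Ico (H - zealC ε h + A) (zealL ε h H A x) ∪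
        Ioc (zealR ε h H A x) (H + zealC ε h + A)) := by
  rintro t (⟨hmt, htL⟩ | ⟨hRt, htM⟩)
  · rw [zealG, if_pos ⟨hmt, htL⟩]
  · have hLt := (zealL_le_zealR hε hh).trans_lt hRt
    rw [zealG, if_neg fun ht => ht.2.not_ge hLt.le, if_neg fun ht => ht.2.not_gt hRt,
      if_pos ⟨hRt, htM⟩]

end Zeal

/-- Probability of the high-density band: the Zeal output lands in the
central band `[L(x), R(x)]` with probability `e^{ε/2}/(e^{ε/2}+1)`, and in the two
tails with probability `1/(e^{ε/2}+1)`. -/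
theorem zeal_band_probability (ε h H A x : ℝ) (hε : 0 < ε) (hh : 0 < h)
    (hx : x ∈ Set.Icc (H - h) (H + h)) :
    (∫ t in Set.Icc (zealL ε h H A x) (zealR ε h H A x), zealG ε h H A x t) =
      Real.exp (ε / 2) / (Real.exp (ε / 2) + 1) ∧
    (∫ t in Set.Ico (H - zealC ε h + A) (zealL ε h H A x) ∪
        Set.Ioc (zealR ε h H A x) (H + zealC ε h + A), zealG ε h H A x t) =
      1 / (Real.exp (ε / 2) + 1) := by
  obtain ⟨hxl, hxu⟩ := hx
  have hLR := zealL_le_zealR (H := H) (A := A) (x := x) hε hh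
  constructor
  · rw [setIntegral_eq_measureReal_mul_of_eqOn measurableSet_Icc zealG_eqOn_band,
      Real.volume_real_Icc_of_le hLR, zealR_sub_zealL, mul_comm,
      zealP_mul_zealC_sub_self hε hh.ne']
  · rw [setIntegral_eq_measureReal_mul_of_eqOn (measurableSet_Ico.union measurableSet_Ioc)
      (zealG_eqOn_tails hε hh), Real.volume_real_Ico_union_Ioc
      (sub_zealC_add_le_zealL hε hh hxl) hLR (zealR_le_add_zealC_add hε hh hxu),
      zealL_sub_add_sub_zealR, mul_comm, zealP_div_exp_mul_zealC_add_self hε hh.ne']
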